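/- arXiv:2208.14612 — 2 statements merged into one kernel-verified Lean document; each statement's English description precedes it below -/
import Mathlib

section
/- Let K_max > 0, α ∈ (0,1], C > 0, and let K_0 = 1, K_1, …, K_t be reals with K_i ≥ 3 K_{i−1} and K_t ≤ K_max. Then C·∑_{i=1}^{t} K_i·ln(3 K_max/(K_i α)) ≤ (3/2)·C·K_max·ln(√27/α). -/
open Real Finset

lemma aux_mono_qsb {x y L : ℝ} (hx : 0 < x) (hxy : x ≤ y) (hL : Real.log y + 1 ≤ L) :
    x * (L - Real.log x) ≤ y * (L - Real.log y) := by
  have hy : 0 < y := lt_of_lt_of_le hx hxy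
  have h1 : Real.log (y / x) ≤ y / x - 1 := Real.log_le_sub_one_of_pos (by positivity)
  rw [Real.log_div hy.ne' hx.ne'] at h1
  have h2 : x * (Real.log y - Real.log x) ≤ y - x := by
    have h := mul_le_mul_of_nonneg_left h1 hx.le
    have hxx : x * (y / x - 1) = y - x := by field_simp
    rw [hxx, mul_sub] at h
    linarith
  have h3 : (y - x) * (Real.log y + 1) ≤ (y - x) * L :=
    mul_le_mul_of_nonneg_left hL (by linarith)
  nlinarith [h2, h3]

theorem query_sum_bound (t : ℕ) (K : ℕ → ℝ) (Kmax α C : ℝ)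
    (hKmax : 0 < Kmax) (hα : α ∈ Set.Ioc (0 : ℝ) 1) (hC : 0 < C)
    (hK0 : K 0 = 1) (hKt : K t ≤ Kmax)
    (hstep : ∀ i, 1 ≤ i → i ≤ t → 3 * K (i - 1) ≤ K i) :
    C * ∑ i ∈ Finset.Icc 1 t, K i * Real.log (3 * Kmax / (K i * α)) ≤
      (3 / 2) * C * Kmax * Real.log (Real.sqrt 27 / α) := by
  obtain ⟨hα0, hα1⟩ := hα
  -- positivity of K
  have hpos : ∀ i, i ≤ t → 0 < K i := by
    intro i
    induction i with
    | zero => intro _; rw [hK0]; norm_num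
    | succ n ih =>
      intro h
      have h3 : 3 * K n ≤ K (n + 1) := by simpa using hstep (n + 1) (by omega) h
      have := ih (by omega)
      linarith
  -- domination: K (t - j) * 3^j ≤ Kmax
  have hdom : ∀ j, j ≤ t → K (t - j) * 3 ^ j ≤ Kmax := by
    intro j
    induction j with
    | zero => intro _; simpa using hKt
    | succ n ih =>
      intro h
      have h1 : 3 * K (t - n - 1) ≤ K (t - n) := by
        have := hstep (t - n) (by omega) (by omega)
        simpa using this
      have h2 := ih (by omega)
      have heq : t - (n + 1) = t - n - 1 := by omega
      rw [heq, pow_succ]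
      have h4 : (3 * K (t - n - 1)) * 3 ^ n ≤ K (t - n) * 3 ^ n :=
        mul_le_mul_of_nonneg_right h1 (by positivity)
      nlinarith [h4, h2]
  set L : ℝ := Real.log (3 * Kmax / α) with hLdef
  have hlog3 : (1 : ℝ) ≤ Real.log 3 := by
    rw [Real.le_log_iff_exp_le (by norm_num)]
    linarith [Real.exp_one_lt_d9]
  have hlogα : Real.log α ≤ 0 := Real.log_nonpos hα0.le hα1
  have hLval : L = Real.log 3 + Real.log Kmax - Real.log α := by
    rw [hLdef, Real.log_div (by positivity) hα0.ne', Real.log_mul (by norm_num) hKmax.ne']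
  -- per-term bound
  have hterm : ∀ i ∈ Finset.Icc 1 t,
      K i * Real.log (3 * Kmax / (K i * α)) ≤
        (Kmax / 3 ^ (t - i)) * (L - Real.log (Kmax / 3 ^ (t - i))) := by
    intro i hi
    simp only [Finset.mem_Icc] at hi
    have hKi : 0 < K i := hpos i hi.2
    have hyi : (0 : ℝ) < Kmax / 3 ^ (t - i) := by positivity
    have hxy : K i ≤ Kmax / 3 ^ (t - i) := by
      rw [le_div_iff₀ (by positivity)]
      have := hdom (t - i) (by omega)
      rwa [Nat.sub_sub_self hi.2] at this
    have harg : 3 * Kmax / (K i * α) = (3 * Kmax / α) / K i := by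
      field_simp
    rw [harg, Real.log_div (by positivity) hKi.ne', ← hLdef]
    refine aux_mono_qsb hKi hxy ?_
    have h5 : Real.log (Kmax / 3 ^ (t - i)) ≤ Real.log Kmax :=
      Real.log_le_log hyi (div_le_self hKmax.le (one_le_pow₀ (by norm_num : (1:ℝ) ≤ 3)))
    rw [hLval]; linarith
  -- sum of per-term bounds, reindexed
  have hre : ∑ i ∈ Finset.Icc 1 t, (Kmax / 3 ^ (t - i)) * (L - Real.log (Kmax / 3 ^ (t - i)))
      = ∑ j ∈ Finset.range t, (Kmax / 3 ^ j) * (L - Real.log (Kmax / 3 ^ j)) := by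
    refine Finset.sum_nbij' (fun i => t - i) (fun j => t - j) ?_ ?_ ?_ ?_ ?_
    · intro a ha; simp only [Finset.mem_Icc] at ha; simp only [Finset.mem_range]; omega
    · intro a ha; simp only [Finset.mem_range] at ha; simp only [Finset.mem_Icc]; omega
    · intro a ha; simp only [Finset.mem_Icc] at ha; show t - (t - a) = a; omega
    · intro a ha; simp only [Finset.mem_range] at ha; show t - (t - a) = a; omega
    · intro a ha; rfl
  -- explicit value of the geometric terms
  have hfval : ∀ j : ℕ, (Kmax / 3 ^ j) * (L - Real.log (Kmax / 3 ^ j))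
      = (Real.log 3 - Real.log α) * ((1/3 : ℝ) ^ j) * Kmax
        + Real.log 3 * ((j : ℝ) * (1/3 : ℝ) ^ j) * Kmax := by
    intro j
    have h3j : (0:ℝ) < 3 ^ j := by positivity
    rw [Real.log_div hKmax.ne' h3j.ne', Real.log_pow, hLval]
    have hp : ((1:ℝ)/3) ^ j = 1 / 3 ^ j := by rw [div_pow]; norm_num
    rw [hp]
    field_simp
    ring
  -- geometric sum bounds
  have hs1 : ∑ j ∈ Finset.range t, ((1:ℝ)/3) ^ j ≤ 3/2 := by
    have hsum : Summable fun n : ℕ => ((1:ℝ)/3) ^ n :=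
      summable_geometric_of_lt_one (by norm_num) (by norm_num)
    calc ∑ j ∈ Finset.range t, ((1:ℝ)/3) ^ j
        ≤ ∑' j : ℕ, ((1:ℝ)/3) ^ j := Summable.sum_le_tsum _ (fun i _ => by positivity) hsum
      _ = (1 - 1/3 : ℝ)⁻¹ := tsum_geometric_of_lt_one (by norm_num) (by norm_num)
      _ = 3/2 := by norm_num
  have hs2 : ∑ j ∈ Finset.range t, (j : ℝ) * ((1:ℝ)/3) ^ j ≤ 3/4 := by
    have hsum : Summable fun n : ℕ => (n : ℝ) * ((1:ℝ)/3) ^ n := by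
      have := summable_pow_mul_geometric_of_norm_lt_one (R := ℝ) 1
        (r := (1/3 : ℝ)) (by rw [Real.norm_eq_abs, abs_of_nonneg (by norm_num : (0:ℝ) ≤ 1/3)]; norm_num)
      exact this.congr (fun n => by simp)
    calc ∑ j ∈ Finset.range t, (j : ℝ) * ((1:ℝ)/3) ^ j
        ≤ ∑' j : ℕ, (j : ℝ) * ((1:ℝ)/3) ^ j :=
          Summable.sum_le_tsum _ (fun i _ => by positivity) hsum
      _ = (1/3 : ℝ) / (1 - 1/3) ^ 2 :=
          tsum_coe_mul_geometric_of_norm_lt_one (by rw [Real.norm_eq_abs, abs_of_nonneg (by norm_num : (0:ℝ) ≤ 1/3)]; norm_num)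
      _ = 3/4 := by norm_num
  -- combine
  have hA : (0:ℝ) ≤ Real.log 3 - Real.log α := by linarith
  have hB : (0:ℝ) ≤ Real.log 3 := by linarith
  have hsum_bound : ∑ i ∈ Finset.Icc 1 t, K i * Real.log (3 * Kmax / (K i * α))
      ≤ (Real.log 3 - Real.log α) * (3/2) * Kmax + Real.log 3 * (3/4) * Kmax := by
    calc ∑ i ∈ Finset.Icc 1 t, K i * Real.log (3 * Kmax / (K i * α))
        ≤ ∑ i ∈ Finset.Icc 1 t, (Kmax / 3 ^ (t - i)) * (L - Real.log (Kmax / 3 ^ (t - i))) :=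
          Finset.sum_le_sum hterm
      _ = ∑ j ∈ Finset.range t, (Kmax / 3 ^ j) * (L - Real.log (Kmax / 3 ^ j)) := hre
      _ = (Real.log 3 - Real.log α) * (∑ j ∈ Finset.range t, ((1:ℝ)/3) ^ j) * Kmax
          + Real.log 3 * (∑ j ∈ Finset.range t, (j : ℝ) * ((1:ℝ)/3) ^ j) * Kmax := by
          rw [Finset.sum_congr rfl (fun j _ => hfval j), Finset.sum_add_distrib,
            ← Finset.sum_mul, ← Finset.sum_mul, ← Finset.mul_sum, ← Finset.mul_sum]
      _ ≤ (Real.log 3 - Real.log α) * (3/2) * Kmax + Real.log 3 * (3/4) * Kmax := by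
          have e1 : (Real.log 3 - Real.log α) * (∑ j ∈ Finset.range t, ((1:ℝ)/3) ^ j)
              ≤ (Real.log 3 - Real.log α) * (3/2) := mul_le_mul_of_nonneg_left hs1 hA
          have e2 : Real.log 3 * (∑ j ∈ Finset.range t, (j : ℝ) * ((1:ℝ)/3) ^ j)
              ≤ Real.log 3 * (3/4) := mul_le_mul_of_nonneg_left hs2 hB
          have := mul_le_mul_of_nonneg_right e1 hKmax.le
          have := mul_le_mul_of_nonneg_right e2 hKmax.le
          linarith
  have hrhs : Real.log (Real.sqrt 27 / α) = (3/2) * Real.log 3 - Real.log α := by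
    rw [Real.log_div (by positivity) hα0.ne', Real.log_sqrt (by norm_num)]
    have : (27 : ℝ) = 3 ^ (3:ℕ) := by norm_num
    rw [this, Real.log_pow]
    push_cast; ring
  rw [hrhs]
  have := mul_le_mul_of_nonneg_left hsum_bound hC.le
  nlinarith [this]
end

section
/- Given θ_a, θ_b with 0 < θ_b − θ_a, |sin²θ_b − sin²θ_a| ≤ sin(π/21)·sin(8π/21), and ⌊θ_a/(π/2)⌋ = ⌈θ_b/(π/2)⌉ − 1 (the two angles lie in the same quadrant), there exists an odd integer q with 3 ≤ q ≤ (π/2)/(θ_b − θ_a) such that ⌊qθ_a/(π/2)⌋ = ⌈qθ_b/(π/2)⌉ − 1. -/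
open Real

/-! Measure angles in quadrants, `u = θ / (π / 2)`, and shift by `⌊u⌋` so that the common quadrant
becomes `[0, 1]`. Then `2 (sin² θb - sin² θa) = ± (cos (π x) - cos (π y))`, and the hypothesis says
that this cosine gap of `(x, y)` is at most the cosine gap of `(1/3, 3/7)`. The angles `q θa`, `q θb`
share a quadrant exactly when no multiple of `1/q` lies strictly between `x` and `y`. If this fails
for `q = 3, 5, 7`, then `(x, y)` contains a third, a fifth and a seventh; after the reflection
`x ↦ 1 - x` the third is `1/3`, and then `(x, y)` strictly contains one of `[1/3, 3/7]`,
`[1/5, 1/3]`, `[2/7, 2/5]`. Each of these has cosine gap at least that of `[1/3, 3/7]`, and the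
cosine gap grows strictly with the interval. -/

section FloorCeil

variable {α : Type*} [Ring α] [LinearOrder α] [FloorRing α]

theorem Int.exists_intCast_between_of_floor_ne_ceil_sub_one [IsStrictOrderedRing α] {u v : α}
    (huv : u < v) (h : ⌊u⌋ ≠ ⌈v⌉ - 1) : ∃ k : ℤ, u < k ∧ (k : α) < v := by
  have hlt : ⌊u⌋ < ⌈v⌉ := Int.cast_lt.mp ((Int.floor_le u).trans_lt (huv.trans_le (Int.le_ceil v)))
  exact ⟨⌊u⌋ + 1, by exact_mod_cast Int.lt_floor_add_one u, Int.lt_ceil.mp (by omega)⟩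

theorem Int.le_floor_add_one_of_floor_eq_ceil_sub_one {u v : α} (h : ⌊u⌋ = ⌈v⌉ - 1) :
    v ≤ ⌊u⌋ + 1 :=
  calc v ≤ ⌈v⌉ := Int.le_ceil v
    _ = ⌊u⌋ + 1 := by rw [h]; push_cast; abel

end FloorCeil

noncomputable def cosGap (x y : ℝ) : ℝ := cos (π * x) - cos (π * y)

theorem cosGap_lt_cosGap {x a b y : ℝ} (hx : 0 ≤ x) (hxa : x < a) (hab : a ≤ b) (hby : b ≤ y)
    (hy : y ≤ 1) : cosGap a b < cosGap x y := by
  have hπ := pi_pos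
  have ha : cos (π * a) < cos (π * x) :=
    cos_lt_cos_of_nonneg_of_le_pi (by positivity) (by nlinarith) (by gcongr)
  have hb : cos (π * y) ≤ cos (π * b) :=
    cos_le_cos_of_nonneg_of_le_pi (by nlinarith) (by nlinarith) (by gcongr)
  unfold cosGap
  linarith

theorem cosGap_one_sub (x y : ℝ) : cosGap (1 - y) (1 - x) = cosGap x y := by
  simp only [cosGap, mul_one_sub, cos_pi_sub]
  ring

theorem cosGap_add_intCast (x y : ℝ) (n : ℤ) :
    cosGap (x + n) (y + n) = (-1) ^ n * cosGap x y := by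
  simp only [cosGap, mul_add, mul_comm π (n : ℝ), cos_add_int_mul_pi]
  ring

theorem cosGap_third_three_sevenths_lt : cosGap (1 / 3) (3 / 7) < 0.28 := by
  have h3 : π * (1 / 3) = π / 3 := by ring
  have h37 : π * (3 / 7) = π / 2 - π / 14 := by ring
  have hsin := sin_gt_sub_cube (x := π / 14) (by positivity)
  have hcube : (π / 14) ^ 3 ≤ 0.2245 ^ 3 := by
    gcongr; linarith [pi_lt_d4]
  rw [cosGap, h3, h37, cos_pi_div_three, cos_pi_div_two_sub]
  norm_num at hcube
  linarith [pi_gt_d4]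

theorem lt_cosGap_fifth_third : 0.28 < cosGap (1 / 5) (1 / 3) := by
  have h5 : π * (1 / 5) = π / 5 := by ring
  have h3 : π * (1 / 3) = π / 3 := by ring
  have hcos := one_sub_sq_div_two_le_cos (x := π / 5)
  have hsq : (π / 5) ^ 2 ≤ 0.6284 ^ 2 := by
    gcongr; linarith [pi_lt_d4]
  rw [cosGap, h5, h3, cos_pi_div_three]
  norm_num at hsq
  linarith

theorem lt_cosGap_two_sevenths_two_fifths : 0.28 < cosGap (2 / 7) (2 / 5) := by
  have h25 : π * (2 / 5) = π / 2 - π / 10 := by ring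
  have hcos := one_sub_sq_div_two_le_cos (x := π * (2 / 7))
  have hsin := sin_lt (x := π / 10) (by positivity)
  have hsq : (π * (2 / 7)) ^ 2 ≤ 0.8976 ^ 2 := by
    gcongr; linarith [pi_lt_d4]
  rw [cosGap, h25, cos_pi_div_two_sub]
  norm_num at hsq
  linarith [pi_lt_d4]

theorem exists_intCast_between_one_sub {q : ℕ} {x y : ℝ}
    (h : ∃ k : ℤ, q * x < k ∧ (k : ℝ) < q * y) :
    ∃ k : ℤ, q * (1 - y) < k ∧ (k : ℝ) < q * (1 - x) := by
  obtain ⟨k, hxk, hky⟩ := h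
  exact ⟨q - k, by push_cast; linarith, by push_cast; linarith⟩

theorem cosGap_third_three_sevenths_lt_of_third_between {x y : ℝ} (hx : 0 ≤ x) (hy : y ≤ 1)
    (h3x : 3 * x < 1) (h3y : 1 < 3 * y)
    (h : ∀ q : ℕ, Odd q → 3 ≤ q → ∃ k : ℤ, q * x < k ∧ (k : ℝ) < q * y) :
    cosGap (1 / 3) (3 / 7) < cosGap x y := by
  rcases le_or_gt (3 / 7) y with hy37 | hy37
  · exact cosGap_lt_cosGap hx (by linarith) (by norm_num) hy37 hy
  obtain ⟨k, hxk, hky⟩ := h 5 (by decide) (by norm_num)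
  obtain ⟨m, hxm, hmy⟩ := h 7 (by decide) (by norm_num)
  push_cast at hxk hky hxm hmy
  have hk : k < 3 := by exact_mod_cast (show (k : ℝ) < 3 by linarith)
  have hm : m < 3 := by exact_mod_cast (show (m : ℝ) < 3 by linarith)
  obtain hk1 | rfl : k ≤ 1 ∨ k = 2 := by omega
  · have hk1 : (k : ℝ) ≤ 1 := by exact_mod_cast hk1
    calc cosGap (1 / 3) (3 / 7) < 0.28 := cosGap_third_three_sevenths_lt
      _ < cosGap (1 / 5) (1 / 3) := lt_cosGap_fifth_third
      _ < cosGap x y := cosGap_lt_cosGap hx (by linarith) (by norm_num) (by linarith) hy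
  · have hm2 : (m : ℝ) ≤ 2 := by exact_mod_cast Int.lt_add_one_iff.mp hm
    push_cast at hky
    calc cosGap (1 / 3) (3 / 7) < 0.28 := cosGap_third_three_sevenths_lt
      _ < cosGap (2 / 7) (2 / 5) := lt_cosGap_two_sevenths_two_fifths
      _ < cosGap x y := cosGap_lt_cosGap hx (by linarith) (by norm_num) (by linarith) hy

theorem cosGap_third_three_sevenths_lt_of_forall_odd {x y : ℝ} (hx : 0 ≤ x) (hy : y ≤ 1)
    (h : ∀ q : ℕ, Odd q → 3 ≤ q → ∃ k : ℤ, q * x < k ∧ (k : ℝ) < q * y) :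
    cosGap (1 / 3) (3 / 7) < cosGap x y := by
  obtain ⟨k, hxk, hky⟩ := h 3 (by decide) le_rfl
  push_cast at hxk hky
  have hk0 : 0 < k := by exact_mod_cast (show (0 : ℝ) < k by linarith)
  have hk3 : k < 3 := by exact_mod_cast (show (k : ℝ) < 3 by linarith)
  obtain rfl | rfl : k = 1 ∨ k = 2 := by omega
  · push_cast at hxk hky
    exact cosGap_third_three_sevenths_lt_of_third_between hx hy hxk hky h
  · push_cast at hxk hky
    rw [← cosGap_one_sub x y]
    exact cosGap_third_three_sevenths_lt_of_third_between (by linarith) (by linarith)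
      (by linarith) (by linarith) fun q hq hq3 => exists_intCast_between_one_sub (h q hq hq3)

theorem exists_odd_floor_eq_ceil_sub_one {u v : ℝ} (huv : u < v) (hquad : ⌊u⌋ = ⌈v⌉ - 1)
    (hgap : |cosGap u v| ≤ cosGap (1 / 3) (3 / 7)) :
    ∃ q : ℕ, Odd q ∧ 3 ≤ q ∧ ⌊q * u⌋ = ⌈q * v⌉ - 1 := by
  set R := ⌊u⌋
  have hx : 0 ≤ u - R := sub_nonneg.mpr (Int.floor_le u)
  have hy : v - R ≤ 1 := by linarith [Int.le_floor_add_one_of_floor_eq_ceil_sub_one hquad]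
  have hshift : |cosGap u v| = |cosGap (u - R) (v - R)| := by
    have := cosGap_add_intCast (u - R) (v - R) R
    rw [sub_add_cancel, sub_add_cancel] at this
    rw [this, abs_mul, abs_neg_one_zpow, one_mul]
  by_contra! hno
  have hlt := cosGap_third_three_sevenths_lt_of_forall_odd hx hy fun q hq hq3 => by
    obtain ⟨k, huk, hkv⟩ := Int.exists_intCast_between_of_floor_ne_ceil_sub_one
      (mul_lt_mul_of_pos_left huv (by exact_mod_cast hq.pos)) (hno q hq hq3)
    exact ⟨k - q * R, by push_cast; linarith, by push_cast; linarith⟩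
  linarith [le_abs_self (cosGap (u - R) (v - R))]

theorem sin_sq_sub_sin_sq_eq_cosGap (a b : ℝ) :
    sin b ^ 2 - sin a ^ 2 = cosGap (a / (π / 2)) (b / (π / 2)) / 2 := by
  have hπ := pi_ne_zero
  rw [sin_sq_eq_half_sub, sin_sq_eq_half_sub, cosGap]
  field_simp
  ring_nf

theorem sin_pi_div_21_mul_sin_eq_cosGap :
    sin (π / 21) * sin (8 * π / 21) = cosGap (1 / 3) (3 / 7) / 2 := by
  rw [cosGap, cos_sub_cos, show (π * (1 / 3) + π * (3 / 7)) / 2 = 8 * π / 21 by ring,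
    show (π * (1 / 3) - π * (3 / 7)) / 2 = -(π / 21) by ring, sin_neg]
  ring

theorem find_next_K_exists_general (θa θb : ℝ) (hab : 0 < θb - θa)
    (hdiff : |Real.sin θb ^ 2 - Real.sin θa ^ 2| ≤ Real.sin (π / 21) * Real.sin (8 * π / 21))
    (hquad : ⌊θa / (π / 2)⌋ = ⌈θb / (π / 2)⌉ - 1) :
    ∃ q : ℕ, Odd q ∧ 3 ≤ q ∧ (q : ℝ) ≤ (π / 2) / (θb - θa) ∧
      ⌊(q : ℝ) * θa / (π / 2)⌋ = ⌈(q : ℝ) * θb / (π / 2)⌉ - 1 := by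
  have hπ : 0 < π / 2 := by positivity
  have huv : θa / (π / 2) < θb / (π / 2) := div_lt_div_of_pos_right (by linarith) hπ
  rw [sin_sq_sub_sin_sq_eq_cosGap, sin_pi_div_21_mul_sin_eq_cosGap, abs_div, abs_two] at hdiff
  obtain ⟨q, hq, hq3, hfloor⟩ :=
    exists_odd_floor_eq_ceil_sub_one huv hquad (by linarith)
  simp only [← mul_div_assoc] at hfloor
  refine ⟨q, hq, hq3, ?_, hfloor⟩
  have hlen := (Int.le_floor_add_one_of_floor_eq_ceil_sub_one hfloor).trans
    (add_le_add_left (Int.floor_le _) 1)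
  rw [le_div_iff₀ hab]
  field_simp at hlen
  linarith

theorem find_next_K_exists (θa θb : ℝ) (h0 : 0 ≤ θa) (hab : 0 < θb - θa)
    (hdiff : |Real.sin θb ^ 2 - Real.sin θa ^ 2| ≤ Real.sin (π / 21) * Real.sin (8 * π / 21))
    (hquad : ⌊θa / (π / 2)⌋ = ⌈θb / (π / 2)⌉ - 1) :
    ∃ q : ℕ, Odd q ∧ 3 ≤ q ∧ (q : ℝ) ≤ (π / 2) / (θb - θa) ∧
      ⌊(q : ℝ) * θa / (π / 2)⌋ = ⌈(q : ℝ) * θb / (π / 2)⌉ - 1 :=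
  find_next_K_exists_general θa θb hab hdiff hquad
end
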